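/- arXiv:2112.04166 — 2 statements merged into one kernel-verified Lean document; each statement's English description precedes it below -/
import Mathlib

section
/- For every n ≥ 2 and every α > 1/n, there exists an instance with n agents in which no allocation is α-NMMS. -/
open Finset

/-- An allocation: a partition of the item set `Fin m` into `n` (possibly empty) bundles. -/
def IsAllocation {n m : ℕ} (A : Fin n → Finset (Fin m)) : Prop :=
  (∀ i j : Fin n, i ≠ j → Disjoint (A i) (A j)) ∧
    Finset.univ.biUnion A = (Finset.univ : Finset (Fin m))

/-- Additive utility of agent `i` for a bundle `S`. -/
def util {n m : ℕ} (u : Fin n → Fin m → ℝ) (i : Fin n) (S : Finset (Fin m)) : ℝ :=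
  ∑ g ∈ S, u i g

/-- Weighted envy-freeness up to (x, y)-fraction of one item. -/
def WEF {n m : ℕ} (w : Fin n → ℝ) (u : Fin n → Fin m → ℝ) (A : Fin n → Finset (Fin m))
    (x y : ℝ) : Prop :=
  ∀ i j : Fin n, ∃ B : Finset (Fin m), B ⊆ A j ∧ B.card ≤ 1 ∧
    (util u i (A i) + y * util u i B) / w i ≥ (util u i (A j) - x * util u i B) / w j

/-- Weighted proportionality up to (x, y)-fraction of one item. -/
def WPROP {n m : ℕ} (w : Fin n → ℝ) (u : Fin n → Fin m → ℝ) (A : Fin n → Finset (Fin m))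
    (x y : ℝ) : Prop :=
  ∀ i : Fin n, ∃ B : Finset (Fin m), B ⊆ Finset.univ \ A i ∧ B.card ≤ 1 ∧
    (util u i (A i) + y * util u i B) / w i ≥
      (util u i Finset.univ - (n : ℝ) * x * util u i B) / (∑ j, w j)

/-- The stronger notion WPROP*(x,y). -/
def WPROPstar {n m : ℕ} (w : Fin n → ℝ) (u : Fin n → Fin m → ℝ) (A : Fin n → Finset (Fin m))
    (x y : ℝ) : Prop :=
  ∀ i : Fin n, ∃ B : Finset (Fin m), B ⊆ Finset.univ \ A i ∧ B.card ≤ 1 ∧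
    ∃ Bf : Fin n → Finset (Fin m),
      (∀ j : Fin n, j ≠ i → Bf j ⊆ A j ∧ (Bf j).card ≤ 1) ∧
      (util u i (A i) + y * util u i B) / w i ≥
        (util u i Finset.univ - x * ∑ j ∈ Finset.univ.erase i, util u i (Bf j)) / (∑ j, w j)

/-- The (1-out-of-n) maximin share of agent `i`. -/
noncomputable def MMS {n m : ℕ} (u : Fin n → Fin m → ℝ) (i : Fin n) : ℝ :=
  sSup {v : ℝ | ∃ Z : Fin n → Finset (Fin m), IsAllocation Z ∧ v = ⨅ j, util u i (Z j)}

/-- The normalized maximin share of agent `i`. -/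
noncomputable def NMMS {n m : ℕ} (w : Fin n → ℝ) (u : Fin n → Fin m → ℝ) (i : Fin n) : ℝ :=
  (w i / ∑ j, w j) * (n : ℝ) * MMS u i

/-- The weighted maximin share of agent `i`. -/
noncomputable def WMMS {n m : ℕ} (w : Fin n → ℝ) (u : Fin n → Fin m → ℝ) (i : Fin n) : ℝ :=
  w i * sSup {v : ℝ | ∃ Z : Fin n → Finset (Fin m), IsAllocation Z ∧
    v = ⨅ j, util u i (Z j) / w j}

/-!
Give every agent utility 1 for each of `n` items, so that each maximin share is at least 1 and
α-NMMS asks agent `i` for at least `α n w_i / w_N` items. Let agent `0` weigh `1 + s` and the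
others `1`, where `s (α n - 1) = n`. Every agent then needs at least one item, and agent `0`
needs more than `α n (1 + s) / (n + s) = 1` items, so `n + 1` items would be needed.
-/

theorem IsAllocation.sum_card {n m : ℕ} {A : Fin n → Finset (Fin m)} (hA : IsAllocation A) :
    ∑ i, #(A i) = m := by
  rw [← card_biUnion fun i _ j _ hij => hA.1 i j hij, hA.2, card_univ, Fintype.card_fin]

theorem IsAllocation.card_le_one_of_forall_pos {n : ℕ} {A : Fin n → Finset (Fin n)}
    (hA : IsAllocation A) (hpos : ∀ j, 0 < #(A j)) (i : Fin n) : #(A i) ≤ 1 := by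
  have hrest : #(univ.erase i) • 1 ≤ ∑ j ∈ univ.erase i, #(A j) :=
    card_nsmul_le_sum _ _ 1 fun j _ => hpos j
  have hsplit := add_sum_erase univ (fun j => #(A j)) (mem_univ i)
  rw [hA.sum_card] at hsplit
  rw [card_erase_of_mem (mem_univ i), card_univ, Fintype.card_fin, smul_eq_mul, mul_one] at hrest
  omega

theorem util_one {n m : ℕ} (i : Fin n) (S : Finset (Fin m)) :
    util (fun _ _ => (1 : ℝ)) i S = #S := by
  simp [util]

theorem iInf_util_le_util_univ {n m : ℕ} {u : Fin n → Fin m → ℝ} {i : Fin n}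
    (hu : ∀ g, 0 ≤ u i g) (Z : Fin n → Finset (Fin m)) :
    ⨅ j, util u i (Z j) ≤ util u i univ := by
  have huniv : 0 ≤ util u i univ := sum_nonneg fun g _ => hu g
  rcases isEmpty_or_nonempty (Fin n) with _ | ⟨⟨j⟩⟩
  · rwa [Real.iInf_of_isEmpty]
  · exact (ciInf_le (Set.finite_range _).bddBelow j).trans
      (sum_le_sum_of_subset_of_nonneg (subset_univ _) fun g _ _ => hu g)

theorem iInf_util_le_MMS {n m : ℕ} {u : Fin n → Fin m → ℝ} {i : Fin n}
    (hu : ∀ g, 0 ≤ u i g) {Z : Fin n → Finset (Fin m)} (hZ : IsAllocation Z) :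
    ⨅ j, util u i (Z j) ≤ MMS u i := by
  refine le_csSup ⟨util u i univ, ?_⟩ ⟨Z, hZ, rfl⟩
  rintro v ⟨Z', -, rfl⟩
  exact iInf_util_le_util_univ hu Z'

theorem isAllocation_singleton (n : ℕ) : IsAllocation fun j : Fin n => ({j} : Finset (Fin n)) :=
  ⟨fun _ _ hij => disjoint_singleton.mpr hij, by ext; simp⟩

theorem one_le_MMS_one {n : ℕ} [NeZero n] (i : Fin n) :
    1 ≤ MMS (fun _ _ : Fin n => (1 : ℝ)) i := by
  have h := iInf_util_le_MMS (u := fun _ _ : Fin n => (1 : ℝ)) (i := i) (fun _ => zero_le_one)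
    (isAllocation_singleton n)
  simpa only [util_one, card_singleton, Nat.cast_one, ciInf_const] using h

theorem le_NMMS_one {n : ℕ} [NeZero n] {w : Fin n → ℝ} (hw : ∀ j, 0 ≤ w j) (i : Fin n) :
    (w i / ∑ j, w j) * n ≤ NMMS w (fun _ _ : Fin n => (1 : ℝ)) i := by
  have : 0 ≤ (w i / ∑ j, w j) * n :=
    mul_nonneg (div_nonneg (hw i) (sum_nonneg fun j _ => hw j)) n.cast_nonneg
  simpa [NMMS] using mul_le_mul_of_nonneg_left (one_le_MMS_one i) this

theorem card_ge_of_ge_mul_NMMS_one {n : ℕ} [NeZero n] {w : Fin n → ℝ} (hw : ∀ j, 0 ≤ w j)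
    {α : ℝ} (hα : 0 ≤ α) {i : Fin n} {S : Finset (Fin n)}
    (h : util (fun _ _ => 1) i S ≥ α * NMMS w (fun _ _ : Fin n => (1 : ℝ)) i) :
    α * ((w i / ∑ j, w j) * n) ≤ #S := by
  rw [util_one] at h
  exact (mul_le_mul_of_nonneg_left (le_NMMS_one hw i) hα).trans h

/-- For every n ≥ 2 and α > 1/n, there is an instance with n agents
in which no allocation is α-NMMS. -/
theorem nmms_no_better_than_inv_n (n : ℕ) (hn : 2 ≤ n) (α : ℝ) (hα : 1 / (n : ℝ) < α) :
    ∃ (m : ℕ) (w : Fin n → ℝ) (u : Fin n → Fin m → ℝ),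
      (∀ i, 0 < w i) ∧ (∀ i g, 0 ≤ u i g) ∧
      ∀ A : Fin n → Finset (Fin m), IsAllocation A →
        ¬ ∀ i, util u i (A i) ≥ α * NMMS w u i := by
  have : NeZero n := ⟨by omega⟩
  have hn0 : (0 : ℝ) < n := by positivity
  have hαn : 1 < α * n := by rwa [div_lt_iff₀ hn0] at hα
  have hα0 : 0 < α := pos_of_mul_pos_left (one_pos.trans hαn) hn0.le
  obtain ⟨s, hs0, hsαn⟩ : ∃ s : ℝ, 0 < s ∧ s * (α * n - 1) = n :=
    ⟨n / (α * n - 1), div_pos hn0 (by linarith), div_mul_cancel₀ _ (by linarith)⟩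
  set w : Fin n → ℝ := 1 + Pi.single 0 s
  have hw0 : w 0 = 1 + s := by simp [w]
  have hw : ∀ i, 0 < w i := fun i => by
    rcases eq_or_ne i 0 with rfl | hi
    · rw [hw0]; positivity
    · simp [w, hi]
  have hwsum : ∑ j, w j = n + s := by simp [w, sum_add_distrib]
  refine ⟨n, w, fun _ _ => 1, hw, fun _ _ => zero_le_one, fun A hA hfair => ?_⟩
  have hdemand : ∀ i, α * (w i / (n + s) * n) ≤ #(A i) := fun i => by
    simpa only [hwsum] using card_ge_of_ge_mul_NMMS_one (fun j => (hw j).le) hα0.le (hfair i)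
  have hpos : ∀ i, 0 < #(A i) := fun i => by
    have : 0 < α * (w i / (n + s) * n) := by have := hw i; positivity
    exact_mod_cast this.trans_le (hdemand i)
  have htwo : 1 < #(A 0) := by
    have : 1 < α * (w 0 / (n + s) * n) := by
      rw [hw0, div_mul_eq_mul_div, mul_div_assoc', one_lt_div (by positivity)]
      nlinarith
    exact_mod_cast this.trans_le (hdemand 0)
  exact (hA.card_le_one_of_forall_pos hpos 0).not_gt htwo
end

section
/- Every allocation satisfying WPROP*(1,0) is 1/n-NMMS. -/
open Finset

open Function

/-!
Fix agent `i` and let `D` be the union of the items `B_j ⊆ A_j`, `j ≠ i`, that WPROP*(1,0)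
removes; then `u_i(A_i) / w_i ≥ u_i(M \ D) / w_N`. Since `|D| ≤ n - 1`, every partition of `M`
into `n` bundles has a bundle avoiding `D`, so `MMS_i ≤ u_i(M \ D)` and hence
`u_i(A_i) ≥ (w_i / w_N) · MMS_i = NMMS_i / n`.
-/

theorem Finset.exists_disjoint_of_card_lt {ι α : Type*} [Fintype ι] {Z : ι → Finset α}
    (hZ : Pairwise (Disjoint on Z)) {D : Finset α} (hD : #D < Fintype.card ι) :
    ∃ k, Disjoint (Z k) D := by
  by_contra! hmeet
  choose f hfZ hfD using fun k => not_disjoint_iff.mp (hmeet k)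
  obtain ⟨k, -, l, -, hkl, hf⟩ :=
    exists_ne_map_eq_of_card_lt_of_maps_to (s := univ) (by simpa using hD) fun k _ => hfD k
  exact disjoint_left.mp (hZ hkl) (hfZ k) (hf ▸ hfZ l)

section Utility

variable {n m : ℕ} {u : Fin n → Fin m → ℝ}

lemma util_nonneg {i : Fin n} (hu : ∀ g, 0 ≤ u i g) (S : Finset (Fin m)) :
    0 ≤ util u i S :=
  sum_nonneg fun g _ => hu g

lemma util_mono {i : Fin n} (hu : ∀ g, 0 ≤ u i g) {S T : Finset (Fin m)} (h : S ⊆ T) :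
    util u i S ≤ util u i T :=
  sum_le_sum_of_subset_of_nonneg h fun g _ _ => hu g

lemma MMS_le_util_sdiff {i : Fin n} (hu : ∀ g, 0 ≤ u i g) {D : Finset (Fin m)}
    (hD : #D < n) : MMS u i ≤ util u i (univ \ D) := by
  refine Real.sSup_le ?_ (util_nonneg hu _)
  rintro v ⟨Z, hZ, rfl⟩
  obtain ⟨k, hk⟩ := exists_disjoint_of_card_lt hZ.1 (by simpa using hD)
  calc ⨅ j, util u i (Z j) ≤ util u i (Z k) := ciInf_le (Set.finite_range _).bddBelow k
    _ ≤ util u i (univ \ D) := util_mono hu (subset_sdiff.mpr ⟨subset_univ _, hk⟩)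

lemma WPROPstar.exists_util_sdiff_div_le {w : Fin n → ℝ} {A : Fin n → Finset (Fin m)}
    (hA : IsAllocation A) (h : WPROPstar w u A 1 0) (i : Fin n) :
    ∃ D : Finset (Fin m), #D < n ∧ util u i (univ \ D) / ∑ j, w j ≤ util u i (A i) / w i := by
  obtain ⟨_, -, -, Bf, hBf, hineq⟩ := h i
  have hBf' : ∀ j ∈ univ.erase i, Bf j ⊆ A j ∧ #(Bf j) ≤ 1 := fun j hj =>
    hBf j (ne_of_mem_erase hj)
  refine ⟨(univ.erase i).biUnion Bf, ?_, ?_⟩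
  · calc #((univ.erase i).biUnion Bf) ≤ #(univ.erase i) * 1 :=
          card_biUnion_le_card_mul _ _ _ fun j hj => (hBf' j hj).2
      _ < n := by simp [card_erase_of_mem, i.pos]
  · have hdisj : (univ.erase i : Set (Fin n)).PairwiseDisjoint Bf := fun j hj k hk hjk =>
      (hA.1 j k hjk).mono (hBf' j hj).1 (hBf' k hk).1
    rw [util, sum_sdiff_eq_sub (subset_univ _), sum_biUnion hdisj]
    simpa [util] using hineq

end Utility

theorem wpropstar_implies_inv_n_nmms_general (n m : ℕ)
    (w : Fin n → ℝ) (hw : ∀ i, 0 < w i)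
    (u : Fin n → Fin m → ℝ) (hu : ∀ i g, 0 ≤ u i g)
    (A : Fin n → Finset (Fin m)) (hA : IsAllocation A)
    (hstar : WPROPstar w u A 1 0) :
    ∀ i, util u i (A i) ≥ (1 / (n : ℝ)) * NMMS w u i := by
  intro i
  obtain ⟨D, hD, hle⟩ := hstar.exists_util_sdiff_div_le hA i
  have hW : 0 < ∑ j, w j := sum_pos (fun j _ => hw j) ⟨i, mem_univ i⟩
  have hn : (n : ℝ) ≠ 0 := Nat.cast_ne_zero.mpr i.pos.ne'
  have hMMS : MMS u i / ∑ j, w j ≤ util u i (A i) / w i :=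
    (div_le_div_of_nonneg_right (MMS_le_util_sdiff (hu i) hD) hW.le).trans hle
  calc (1 / (n : ℝ)) * NMMS w u i = w i * (MMS u i / ∑ j, w j) := by
        unfold NMMS; field_simp
    _ ≤ util u i (A i) := by rwa [← le_div_iff₀' (hw i)]

/-- Every WPROP*(1,0) allocation is 1/n-NMMS. -/
theorem wpropstar_implies_inv_n_nmms (n m : ℕ) (hn : 2 ≤ n)
    (w : Fin n → ℝ) (hw : ∀ i, 0 < w i)
    (u : Fin n → Fin m → ℝ) (hu : ∀ i g, 0 ≤ u i g)
    (A : Fin n → Finset (Fin m)) (hA : IsAllocation A)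
    (hstar : WPROPstar w u A 1 0) :
    ∀ i, util u i (A i) ≥ (1 / (n : ℝ)) * NMMS w u i :=
  wpropstar_implies_inv_n_nmms_general n m w hw u hu A hA hstar
end
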